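/- Assume d ≥ 1, L ≥ 1, γ > 0, λ > 0. The points (−1, 1) and (1, −1) are global maximizers of R on the square [−1, 1]²: for every (κ, ν) ∈ [−1, 1]², R(κ, ν) ≤ R(−1, 1) = R(1, −1), with strict inequality unless (κ, ν) ∈ {(−1, 1), (1, −1)}. -/

import Mathlib

/-!
With `b = λ√(d/2)`, `c = b / √(1 + 2λ²γ²)` and `s = λ²γ²`,
`R(-1, 1) - R(κ, ν) = γ² (2 (erf c + ν erf (c κ)) + ζ(b, s) - ζ(b κ, s))`.
On the square the first bracket is nonnegative because `|erf (c κ)| ≤ erf c`, and at `|κ| = 1`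
it vanishes only if `κ ν = -1`. The second is nonnegative and vanishes only at `|κ| = 1`,
because `t ↦ E[erf (t + G)²]` is even and strictly increasing in `|t|`: for `|x| < y`,
reflecting through `(x + y) / 2` writes twice the difference of the two Gaussian averages as
`∫ (p_y - p_x)(u) (f u - f (x + y - u)) du`, whose integrand is positive off `u = (x + y) / 2`.
-/

open MeasureTheory ProbabilityTheory Real Filter

noncomputable def erf (u : ℝ) : ℝ := 2 / Real.sqrt Real.pi * ∫ r in (0:ℝ)..u, Real.exp (-r ^ 2)

noncomputable def zeta (t s : ℝ) : ℝ := ∫ g, erf (t + g) ^ 2 ∂(gaussianReal 0 s.toNNReal)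

/-- The reduced risk `R(κ, ν)` on the invariant manifold. -/
noncomputable def Rred (d L : ℕ) (γ lam ε : ℝ) (κ ν : ℝ) : ℝ :=
  γ ^ 2 - 2 * γ ^ 2 * ν * erf (lam * Real.sqrt ((d : ℝ) / 2) * κ /
      Real.sqrt (1 + 2 * lam ^ 2 * γ ^ 2))
    + γ ^ 2 * zeta (lam * Real.sqrt ((d : ℝ) / 2) * κ) (lam ^ 2 * γ ^ 2)
    + ((L : ℝ) - 1) * zeta 0 (lam ^ 2) + ε ^ 2

/-- Partial derivative `∂κR` of the reduced risk with respect to its first argument. -/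
noncomputable def dkR (d L : ℕ) (γ lam ε : ℝ) (κ ν : ℝ) : ℝ :=
  deriv (fun x => Rred d L γ lam ε x ν) κ

/-- Partial derivative `∂νR` of the reduced risk with respect to its second argument. -/
noncomputable def dvR (d L : ℕ) (γ lam ε : ℝ) (κ ν : ℝ) : ℝ :=
  deriv (fun y => Rred d L γ lam ε κ y) ν

/-- The PGD map `g_α`. -/
noncomputable def pgd (d L : ℕ) (γ lam ε α : ℝ) (p : ℝ × ℝ) : ℝ × ℝ :=
  ((p.1 - α * dkR d L γ lam ε p.1 p.2 * (1 - p.1 ^ 2)) /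
      Real.sqrt (1 + α ^ 2 * (dkR d L γ lam ε p.1 p.2) ^ 2 * (1 - p.1 ^ 2)),
   (p.2 - α * dvR d L γ lam ε p.1 p.2 * (1 - p.2 ^ 2)) /
      Real.sqrt (1 + α ^ 2 * (dvR d L γ lam ε p.1 p.2) ^ 2 * (1 - p.2 ^ 2)))

/-- The square `[−1, 1]²`. -/
def sqIcc : Set (ℝ × ℝ) := {p | p.1 ∈ Set.Icc (-1 : ℝ) 1 ∧ p.2 ∈ Set.Icc (-1 : ℝ) 1}

open Set
open scoped NNReal

lemma hasDerivAt_erf (u : ℝ) : HasDerivAt erf (2 / √π * exp (-u ^ 2)) u := by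
  have hcont : Continuous fun r : ℝ => exp (-r ^ 2) := by fun_prop
  exact (intervalIntegral.integral_hasDerivAt_right (hcont.intervalIntegrable _ _)
    hcont.aestronglyMeasurable.stronglyMeasurableAtFilter hcont.continuousAt).const_mul _

lemma continuous_erf : Continuous erf :=
  continuous_iff_continuousAt.mpr fun u => (hasDerivAt_erf u).continuousAt

lemma strictMono_erf : StrictMono erf :=
  strictMono_of_hasDerivAt_pos hasDerivAt_erf fun u => by positivity

@[simp] lemma erf_zero : erf 0 = 0 := by simp [erf]

@[simp] lemma erf_neg (u : ℝ) : erf (-u) = -erf u := by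
  have h := intervalIntegral.integral_comp_neg (a := 0) (b := u) fun r : ℝ => exp (-r ^ 2)
  simp only [neg_sq, neg_zero] at h
  rw [erf, erf, h, intervalIntegral.integral_symm]
  ring

lemma tendsto_erf_atTop : Tendsto erf atTop (nhds 1) := by
  have hint : IntegrableOn (fun r : ℝ => exp (-1 * r ^ 2)) (Ioi 0) :=
    integrableOn_Ioi_exp_neg_mul_sq_iff.mpr one_pos
  have h := (intervalIntegral_tendsto_integral_Ioi 0 hint tendsto_id).const_mul (2 / √π)
  rw [integral_gaussian_Ioi, div_one] at h
  convert h using 2 with u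
  · simp [erf]
  · field_simp

lemma abs_erf (u : ℝ) : |erf u| = erf |u| := by
  rcases le_total 0 u with hu | hu
  · rw [abs_of_nonneg hu, abs_of_nonneg (by simpa using strictMono_erf.monotone hu)]
  · rw [abs_of_nonpos hu, abs_of_nonpos (by simpa using strictMono_erf.monotone hu), erf_neg]

lemma abs_erf_le_one (u : ℝ) : |erf u| ≤ 1 :=
  abs_erf u ▸ strictMono_erf.monotone.ge_of_tendsto tendsto_erf_atTop |u|

lemma erf_sq_lt_erf_sq {a b : ℝ} (h : |a| < |b|) : erf a ^ 2 < erf b ^ 2 := by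
  rw [sq_lt_sq, abs_erf, abs_erf]
  exact strictMono_erf h

section GaussianShift

variable {v : ℝ≥0}

lemma gaussianPDFReal_lt_gaussianPDFReal (hv : v ≠ 0) {μ μ' x : ℝ}
    (h : (x - μ') ^ 2 < (x - μ) ^ 2) : gaussianPDFReal μ v x < gaussianPDFReal μ' v x := by
  have hv' : (0 : ℝ) < v := NNReal.coe_pos.mpr (pos_iff_ne_zero.mpr hv)
  simp only [gaussianPDFReal]
  gcongr

lemma gaussianPDFReal_add_sub (μ μ' x : ℝ) :
    gaussianPDFReal μ' v (μ + μ' - x) = gaussianPDFReal μ v x := by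
  simp only [gaussianPDFReal]
  ring_nf

lemma integral_gaussianReal_neg_mean {f : ℝ → ℝ} (hf : ∀ u, f (-u) = f u) (μ : ℝ) :
    ∫ u, f u ∂gaussianReal (-μ) v = ∫ u, f u ∂gaussianReal μ v := by
  have hneg : MeasurableEmbedding fun u : ℝ => -u := (MeasurableEquiv.neg ℝ).measurableEmbedding
  rw [← gaussianReal_map_neg, hneg.integral_map]
  simp only [hf]

lemma integral_comp_add_gaussianReal (f : ℝ → ℝ) (μ : ℝ) :
    ∫ g, f (μ + g) ∂gaussianReal 0 v = ∫ u, f u ∂gaussianReal μ v := by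
  rw [← zero_add μ, ← gaussianReal_map_const_add, (measurableEmbedding_addLeft μ).integral_map,
    zero_add]

lemma two_mul_sub_integral_gaussianReal (hv : v ≠ 0) {f : ℝ → ℝ} (hfm : Measurable f) {C : ℝ}
    (hfC : ∀ u, |f u| ≤ C) (x y : ℝ) :
    2 * (∫ u, f u ∂gaussianReal y v - ∫ u, f u ∂gaussianReal x v) =
      ∫ u, (gaussianPDFReal y v u - gaussianPDFReal x v u) * (f u - f (x + y - u)) := by
  set p := gaussianPDFReal x v
  set q := gaussianPDFReal y v
  have hint : ∀ g : ℝ → ℝ, Measurable g → (∀ u, |g u| ≤ C) →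
      Integrable fun u => (q u - p u) * g u := fun g hg hgC =>
    ((integrable_gaussianPDFReal y v).sub (integrable_gaussianPDFReal x v)).mul_bdd
      hg.aestronglyMeasurable (ae_of_all _ hgC)
  have hdiff : ∫ u, f u ∂gaussianReal y v - ∫ u, f u ∂gaussianReal x v
      = ∫ u, (q u - p u) * f u := by
    have hI : ∀ μ, Integrable fun u => gaussianPDFReal μ v u * f u := fun μ =>
      (integrable_gaussianPDFReal μ v).mul_bdd hfm.aestronglyMeasurable (ae_of_all _ hfC)
    simp only [integral_gaussianReal_eq_integral_smul hv, smul_eq_mul]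
    rw [← integral_sub (hI y) (hI x)]
    simp only [q, p, sub_mul]
  -- reflecting through `(x + y) / 2` swaps the two densities
  have hreflect : ∫ u, (q u - p u) * f (x + y - u) = -∫ u, (q u - p u) * f u := by
    rw [← integral_neg, ← integral_sub_left_eq_self _ volume (x + y)]
    congr 1 with u
    simp only [q, p, sub_sub_cancel]
    rw [gaussianPDFReal_add_sub, add_comm x y, gaussianPDFReal_add_sub]
    ring
  have hfm' : Measurable fun u => f (x + y - u) := hfm.comp (measurable_const.sub measurable_id)
  rw [hdiff]
  simp only [mul_sub]
  rw [integral_sub (hint f hfm hfC) (hint _ hfm' fun u => hfC _), hreflect]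
  ring

lemma sub_gaussianPDFReal_mul_sub_pos (hv : v ≠ 0) {f : ℝ → ℝ}
    (hf : ∀ a b, |a| < |b| → f a < f b) {x y u : ℝ} (hxy : |x| < y) (hu : 2 * u ≠ x + y) :
    0 < (gaussianPDFReal y v u - gaussianPDFReal x v u) * (f u - f (x + y - u)) := by
  obtain ⟨hxy₁, hxy₂⟩ := abs_lt.mp hxy
  rcases hu.lt_or_gt with hu | hu
  · exact mul_pos_of_neg_of_neg
      (sub_neg.mpr (gaussianPDFReal_lt_gaussianPDFReal hv (by nlinarith)))
      (sub_neg.mpr (hf _ _ (sq_lt_sq.mp (by nlinarith))))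
  · exact mul_pos (sub_pos.mpr (gaussianPDFReal_lt_gaussianPDFReal hv (by nlinarith)))
      (sub_pos.mpr (hf _ _ (sq_lt_sq.mp (by nlinarith))))

theorem integral_gaussianReal_lt_of_abs_lt (hv : v ≠ 0) {f : ℝ → ℝ} (hfm : Measurable f)
    {C : ℝ} (hfC : ∀ u, |f u| ≤ C) (hf : ∀ a b, |a| < |b| → f a < f b) {x y : ℝ} (hxy : |x| < y) :
    ∫ u, f u ∂gaussianReal x v < ∫ u, f u ∂gaussianReal y v := by
  set k := fun u => (gaussianPDFReal y v u - gaussianPDFReal x v u) * (f u - f (x + y - u))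
  have hk_pos : ∀ u, 2 * u ≠ x + y → 0 < k u := fun u hu =>
    sub_gaussianPDFReal_mul_sub_pos hv hf hxy hu
  have hk_nonneg : 0 ≤ k := fun u => by
    by_cases hu : 2 * u = x + y
    · simp [k, show x + y - u = u by linarith]
    · exact (hk_pos u hu).le
  have hk_int : Integrable k := by
    exact ((integrable_gaussianPDFReal y v).sub (integrable_gaussianPDFReal x v)).mul_bdd
      (hfm.sub (hfm.comp (measurable_const.sub measurable_id))).aestronglyMeasurable
      (ae_of_all _ fun u => (abs_sub _ _).trans (add_le_add (hfC _) (hfC _)))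
  have : 0 < ∫ u, k u := by
    rw [integral_pos_iff_support_of_nonneg hk_nonneg hk_int]
    refine lt_of_lt_of_le ?_ (measure_mono fun u (hu : u ∈ Ioi ((x + y) / 2)) =>
      (hk_pos u (by linarith [mem_Ioi.mp hu])).ne')
    simp only [Real.volume_Ioi, ENNReal.zero_lt_top]
  linarith [two_mul_sub_integral_gaussianReal hv hfm hfC x y]

end GaussianShift

lemma zeta_eq_integral (t s : ℝ) : zeta t s = ∫ u, erf u ^ 2 ∂gaussianReal t s.toNNReal :=
  integral_comp_add_gaussianReal (fun u => erf u ^ 2) t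

lemma zeta_neg (t s : ℝ) : zeta (-t) s = zeta t s := by
  rw [zeta_eq_integral, zeta_eq_integral, integral_gaussianReal_neg_mean (by simp)]

lemma zeta_abs (t s : ℝ) : zeta |t| s = zeta t s := by
  rcases abs_choice t with h | h <;> rw [h]
  exact zeta_neg t s

lemma zeta_lt_zeta_of_abs_lt {s x y : ℝ} (hs : 0 < s) (h : |x| < y) : zeta x s < zeta y s := by
  rw [zeta_eq_integral, zeta_eq_integral]
  refine integral_gaussianReal_lt_of_abs_lt (by simpa using hs)
    (continuous_erf.measurable.pow_const 2) (C := 1) (fun u => ?_) (fun _ _ => erf_sq_lt_erf_sq) h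
  rw [abs_pow]
  exact pow_le_one₀ (abs_nonneg _) (abs_erf_le_one u)

lemma zeta_le_zeta_of_abs_le {s x y : ℝ} (hs : 0 < s) (h : |x| ≤ y) : zeta x s ≤ zeta y s := by
  rcases h.lt_or_eq with h | rfl
  · exact (zeta_lt_zeta_of_abs_lt hs h).le
  · rw [zeta_abs]

lemma erf_add_mul_erf_mul_nonneg {c κ ν : ℝ} (hc : 0 ≤ c) (hκ : |κ| ≤ 1) (hν : |ν| ≤ 1) :
    0 ≤ erf c + ν * erf (c * κ) := by
  have hκ' : |erf (c * κ)| ≤ erf c := by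
    rw [abs_erf, abs_mul, abs_of_nonneg hc]
    exact strictMono_erf.monotone (mul_le_of_le_one_right hc hκ)
  have : |ν * erf (c * κ)| ≤ erf c := by
    rw [abs_mul]
    simpa using mul_le_mul hν hκ' (abs_nonneg _) zero_le_one
  linarith [neg_abs_le (ν * erf (c * κ))]

lemma erf_add_mul_erf_mul_pos {c κ ν : ℝ} (hc : 0 < c) (hκ : |κ| = 1) (hν : |ν| ≤ 1)
    (hκν : κ * ν ≠ -1) : 0 < erf c + ν * erf (c * κ) := by
  have hκ' : erf (c * κ) = κ * erf c := by
    rcases abs_eq (zero_le_one' ℝ) |>.mp hκ with rfl | rfl <;> simp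
  have : |κ * ν| ≤ 1 := by rw [abs_mul, hκ, one_mul]; exact hν
  have : 0 < 1 + κ * ν := by
    rcases (neg_le_of_abs_le this).lt_or_eq with h | h
    · linarith
    · exact absurd h.symm hκν
  rw [hκ']
  nlinarith [show 0 < erf c by simpa using strictMono_erf hc]

lemma eq_neg_one_one_or_eq_one_neg_one {κ ν : ℝ} (hκ : |κ| ≤ 1) (hν : |ν| ≤ 1)
    (h : κ * ν = -1) : (κ, ν) = (-1, 1) ∨ (κ, ν) = (1, -1) := by
  have hκ2 : κ ^ 2 ≤ 1 := by rw [← sq_abs]; nlinarith [abs_nonneg κ]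
  have hν2 : ν ^ 2 ≤ 1 := by rw [← sq_abs]; nlinarith [abs_nonneg ν]
  have hκ1 : κ ^ 2 = 1 := by nlinarith [sq_nonneg κ, sq_nonneg ν]
  have hνκ : ν = -κ := by linear_combination (-ν) * hκ1 + κ * h
  rcases sq_eq_one_iff.mp hκ1 with rfl | rfl <;> simp [hνκ]

theorem stmt6_general (d L : ℕ) (hd : 1 ≤ d) (γ lam ε : ℝ)
    (hγ : 0 < γ) (hlam : 0 < lam) :
    Rred d L γ lam ε (-1) 1 = Rred d L γ lam ε 1 (-1) ∧
    ∀ p ∈ sqIcc, Rred d L γ lam ε p.1 p.2 ≤ Rred d L γ lam ε (-1) 1 ∧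
      (p ≠ ((-1 : ℝ), (1 : ℝ)) → p ≠ ((1 : ℝ), (-1 : ℝ)) →
        Rred d L γ lam ε p.1 p.2 < Rred d L γ lam ε (-1) 1) := by
  set b := lam * √((d : ℝ) / 2) with hb_def
  set a := √(1 + 2 * lam ^ 2 * γ ^ 2) with ha_def
  set s := lam ^ 2 * γ ^ 2 with hs_def
  have hb : 0 < b := mul_pos hlam (Real.sqrt_pos.mpr (by positivity))
  have hc : 0 < b / a := div_pos hb (Real.sqrt_pos.mpr (by positivity))
  have hs : 0 < s := by positivity
  have hgap : ∀ κ ν, Rred d L γ lam ε (-1) 1 - Rred d L γ lam ε κ ν =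
      γ ^ 2 * (2 * (erf (b / a) + ν * erf (b / a * κ)) + (zeta b s - zeta (b * κ) s)) := by
    intro κ ν
    simp only [Rred, ← hb_def, ← ha_def, ← hs_def, mul_neg_one, neg_div, erf_neg, zeta_neg,
      div_mul_eq_mul_div]
    ring
  refine ⟨by simpa [sub_eq_zero] using hgap 1 (-1), fun ⟨κ, ν⟩ hp => ?_⟩
  obtain ⟨hκ, hν⟩ : |κ| ≤ 1 ∧ |ν| ≤ 1 := ⟨abs_le.mpr hp.1, abs_le.mpr hp.2⟩
  have hA := erf_add_mul_erf_mul_nonneg hc.le hκ hν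
  have hB : zeta (b * κ) s ≤ zeta b s := zeta_le_zeta_of_abs_le hs
    (by rw [abs_mul, abs_of_pos hb]; exact mul_le_of_le_one_right hb.le hκ)
  refine ⟨sub_nonneg.mp (hgap κ ν ▸ mul_nonneg (by positivity) (by linarith)),
    fun h₁ h₂ => sub_pos.mp (hgap κ ν ▸ mul_pos (by positivity) ?_)⟩
  rcases hκ.lt_or_eq with hκ | hκ
  · have := zeta_lt_zeta_of_abs_lt hs
      (by rw [abs_mul, abs_of_pos hb]; exact mul_lt_of_lt_one_right hb hκ : |b * κ| < b)
    linarith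
  · have hκν : κ * ν ≠ -1 := fun h => by
      rcases eq_neg_one_one_or_eq_one_neg_one hκ.le hν h with h | h
      exacts [h₁ h, h₂ h]
    linarith [erf_add_mul_erf_mul_pos hc hκ hν hκν]

/-- `(−1,1)` and `(1,−1)` are the global maximizers of the reduced risk on `[−1,1]²`. -/
theorem stmt6 (d L : ℕ) (hd : 1 ≤ d) (hL : 1 ≤ L) (γ lam ε : ℝ)
    (hγ : 0 < γ) (hlam : 0 < lam) (hε : 0 ≤ ε) :
    Rred d L γ lam ε (-1) 1 = Rred d L γ lam ε 1 (-1) ∧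
    ∀ p ∈ sqIcc, Rred d L γ lam ε p.1 p.2 ≤ Rred d L γ lam ε (-1) 1 ∧
      (p ≠ ((-1 : ℝ), (1 : ℝ)) → p ≠ ((1 : ℝ), (-1 : ℝ)) →
        Rred d L γ lam ε p.1 p.2 < Rred d L γ lam ε (-1) 1) :=
  stmt6_general d L hd γ lam ε hγ hlam
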